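/- Let T be the (q+1)-homogeneous rooted tree with q ≥ 2, let φ be a self-map of T and let 1 ≤ p < ∞. Then C_φ is an invertible bounded operator on T_p if and only if φ is a bijection of T and there exists M > 0 such that | |φ(v)| − |v| | ≤ M for all v ∈ T. -/

import Mathlib

/-!
Indicators of single vertices lie in `T_p`, with `‖1_w‖_p = c_{|w|}^{-1/p}`. If `C_φ` has an
inverse `B`, then `(B 1_a) ∘ φ = 1_a` forces `φ` to be injective and `B (1_w ∘ φ) = 1_w` forces
it to be surjective, so `B = C_{φ⁻¹}`. Since `1_{φ v} ∘ φ = 1_v`, boundedness of `C_φ` gives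
`c_{|φ v|} ≤ ‖C_φ‖^p c_{|v|}`, and as `c_{n+k} ≥ q^k c_n` with `q ≥ 2` this bounds `|φ v| - |v|`;
`C_{φ⁻¹}` bounds `|v| - |φ v|` in the same way.

Conversely, if an injective `ψ` moves levels by at most `N`, level `n` of `f ∘ ψ` is fed by the
levels `n - N, …, n + N` of `f`, each with at most `(q + 1) q^N c_n` vertices, so `C_ψ` is bounded;
apply this to `φ` and `φ⁻¹`.
-/

open scoped BigOperators Classical

noncomputable section

/-- `treeC q n` is the number `c_n` of vertices at level `n` of the
`(q+1)`-homogeneous rooted tree: `c_0 = 1` and `c_n = (q+1) q^(n-1)` for `n ≥ 1`. -/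
def treeC (q n : ℕ) : ℕ := if n = 0 then 1 else (q + 1) * q ^ (n - 1)

/-- An abstract `(q+1)`-homogeneous rooted tree, described by its vertex set, root,
level function `|·|` (graph distance to the root), and the level counts:
level `n` contains exactly `c_n = treeC q n` vertices. -/
structure HomTree (q : ℕ) where
  V : Type
  root : V
  level : V → ℕ
  level_eq_zero_iff : ∀ v : V, level v = 0 ↔ v = root
  finiteLevel : ∀ n : ℕ, {v : V | level v = n}.Finite
  card_level : ∀ n : ℕ, (finiteLevel n).toFinset.card = treeC q n

namespace HomTree

variable {q : ℕ} (T : HomTree q)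

/-- The set `D_n` of vertices of level `n`, as a finset. -/
def levelFinset (n : ℕ) : Finset T.V := (T.finiteLevel n).toFinset

/-- `M_p(n, f)` for `0 < p < ∞`:
`M_p(n,f) = ((1/c_n) ∑_{|v|=n} |f v|^p)^(1/p)` (which equals `|f o|` for `n = 0`). -/
def Mp (p : ℝ) (n : ℕ) (f : T.V → ℂ) : ℝ :=
  ((1 / (treeC q n : ℝ)) * ∑ v ∈ T.levelFinset n, ‖f v‖ ^ p) ^ (1 / p)

/-- `M_∞(n, f) = max_{|v| = n} |f v|`. -/
def Minf (n : ℕ) (f : T.V → ℂ) : ℝ :=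
  sSup ((fun v => ‖f v‖) '' {v : T.V | T.level v = n})

/-- `f ∈ T_p`, i.e. `‖f‖_p = sup_n M_p(n,f) < ∞`. -/
def memTp (p : ℝ) (f : T.V → ℂ) : Prop := BddAbove (Set.range fun n => T.Mp p n f)

/-- `‖f‖_p = sup_n M_p(n, f)`. -/
def normTp (p : ℝ) (f : T.V → ℂ) : ℝ := ⨆ n, T.Mp p n f

/-- `f ∈ T_∞`. -/
def memTinf (f : T.V → ℂ) : Prop := BddAbove (Set.range fun n => T.Minf n f)

/-- `‖f‖_∞ = sup_n M_∞(n, f)`. -/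
def normTinf (f : T.V → ℂ) : ℝ := ⨆ n, T.Minf n f

/-- `f ∈ T_{p,0}`: `f ∈ T_p` and `M_p(n,f) → 0` as `n → ∞`. -/
def memTp0 (p : ℝ) (f : T.V → ℂ) : Prop :=
  T.memTp p f ∧ Filter.Tendsto (fun n => T.Mp p n f) Filter.atTop (nhds 0)

/-- `f ∈ T_{∞,0}`. -/
def memTinf0 (f : T.V → ℂ) : Prop :=
  T.memTinf f ∧ Filter.Tendsto (fun n => T.Minf n f) Filter.atTop (nhds 0)

/-- `N_φ(n, w)`: the number of preimages of `w` under `φ` at level `n`. -/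
def Nphi (phi : T.V → T.V) (n : ℕ) (w : T.V) : ℕ :=
  ((T.levelFinset n).filter fun v => phi v = w).card

/-- `N_{m,n} = max_{|w| = m} N_φ(n, w)`. -/
def Nmax (phi : T.V → T.V) (m n : ℕ) : ℕ :=
  (T.levelFinset m).sup fun w => T.Nphi phi n w

/-- `C_φ` is a bounded operator on `T_p`: it maps `T_p` into `T_p` and
`‖f ∘ φ‖_p ≤ C ‖f‖_p` for some constant `C`. -/
def BoundedCompTp (p : ℝ) (phi : T.V → T.V) : Prop :=
  (∀ f : T.V → ℂ, T.memTp p f → T.memTp p (f ∘ phi)) ∧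
  ∃ C : ℝ, ∀ f : T.V → ℂ, T.memTp p f → T.normTp p (f ∘ phi) ≤ C * T.normTp p f

/-- The operator norm of `C_φ` on `T_p`: `sup {‖f ∘ φ‖_p : f ∈ T_p, ‖f‖_p = 1}`. -/
def opNormTp (p : ℝ) (phi : T.V → T.V) : ℝ :=
  sSup {x : ℝ | ∃ f : T.V → ℂ, T.memTp p f ∧ T.normTp p f = 1 ∧ x = T.normTp p (f ∘ phi)}

/-- `C_φ` is a bounded operator on `T_{p,0}`. -/
def BoundedCompTp0 (p : ℝ) (phi : T.V → T.V) : Prop :=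
  (∀ f : T.V → ℂ, T.memTp0 p f → T.memTp0 p (f ∘ phi)) ∧
  ∃ C : ℝ, ∀ f : T.V → ℂ, T.memTp0 p f → T.normTp p (f ∘ phi) ≤ C * T.normTp p f

/-- The operator norm of `C_φ` on `T_{p,0}`. -/
def opNormTp0 (p : ℝ) (phi : T.V → T.V) : ℝ :=
  sSup {x : ℝ | ∃ f : T.V → ℂ, T.memTp0 p f ∧ T.normTp p f = 1 ∧ x = T.normTp p (f ∘ phi)}

/-- `C_φ` is a bounded operator on `T_{∞,0}`. -/
def BoundedCompTinf0 (phi : T.V → T.V) : Prop :=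
  (∀ f : T.V → ℂ, T.memTinf0 f → T.memTinf0 (f ∘ phi)) ∧
  ∃ C : ℝ, ∀ f : T.V → ℂ, T.memTinf0 f → T.normTinf (f ∘ phi) ≤ C * T.normTinf f

end HomTree
namespace HomTree

variable {q : ℕ} (T : HomTree q)

/-- `C_φ` is an invertible bounded operator on `T_p`: there is a bounded linear
operator `B` on `T_p` with `B ∘ C_φ = C_φ ∘ B = id` on `T_p`. -/
def InvertibleCompTp (p : ℝ) (phi : T.V → T.V) : Prop :=
  T.BoundedCompTp p phi ∧
  ∃ B : (T.V → ℂ) → (T.V → ℂ),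
    (∀ f g : T.V → ℂ, T.memTp p f → T.memTp p g → B (f + g) = B f + B g) ∧
    (∀ (c : ℂ) (f : T.V → ℂ), T.memTp p f → B (c • f) = c • B f) ∧
    (∀ f : T.V → ℂ, T.memTp p f → T.memTp p (B f)) ∧
    (∃ C : ℝ, ∀ f : T.V → ℂ, T.memTp p f → T.normTp p (B f) ≤ C * T.normTp p f) ∧
    (∀ f : T.V → ℂ, T.memTp p f → B (f ∘ phi) = f) ∧
    (∀ f : T.V → ℂ, T.memTp p f → (B f) ∘ phi = f)

end HomTree

open Finset

lemma treeC_pos {q : ℕ} (hq : 0 < q) (n : ℕ) : 0 < treeC q n := by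
  unfold treeC; split_ifs <;> positivity

lemma treeC_mono {q : ℕ} (hq : 0 < q) : Monotone (treeC q) := by
  intro m n hmn
  unfold treeC
  split_ifs
  · rfl
  · exact Nat.one_le_iff_ne_zero.mpr (by positivity)
  · omega
  · gcongr

lemma pow_mul_treeC_le (q n k : ℕ) : q ^ k * treeC q n ≤ treeC q (n + k) := by
  rcases Nat.eq_zero_or_pos n with rfl | hn
  · rcases k with _ | k
    · simp [treeC]
    · simp only [treeC, zero_add, add_tsub_cancel_right, if_pos, Nat.add_one_ne_zero,
        if_false, mul_one, pow_succ']
      gcongr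
      omega
  · rw [treeC, treeC, if_neg hn.ne', if_neg (by omega), show n + k - 1 = n - 1 + k by omega,
      pow_add]
    exact le_of_eq (by ring)

lemma treeC_add_le {q : ℕ} (hq : 0 < q) (n k : ℕ) :
    treeC q (n + k) ≤ (q + 1) * q ^ k * treeC q n := by
  rcases Nat.eq_zero_or_pos n with rfl | hn
  · rcases k with _ | k
    · simp [treeC]
    · simp only [treeC, zero_add, add_tsub_cancel_right, if_pos, Nat.add_one_ne_zero,
        if_false, mul_one]
      gcongr
      omega
  · rw [treeC, treeC, if_neg hn.ne', if_neg (by omega), show n + k - 1 = n - 1 + k by omega,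
      pow_add]
    calc (q + 1) * (q ^ (n - 1) * q ^ k) = 1 * ((q + 1) * q ^ k * q ^ (n - 1)) := by ring
      _ ≤ (q + 1) * ((q + 1) * q ^ k * q ^ (n - 1)) := by gcongr; omega
      _ = (q + 1) * q ^ k * ((q + 1) * q ^ (n - 1)) := by ring

lemma le_add_of_treeC_le {q : ℕ} (hq : 2 ≤ q) {m n : ℕ} {A : ℝ}
    (h : (treeC q m : ℝ) ≤ A * treeC q n) : (m : ℝ) ≤ n + A := by
  have hcn : (0 : ℝ) < treeC q n := by exact_mod_cast treeC_pos (by omega) n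
  have hA : 0 < A := by
    have : (0 : ℝ) < treeC q m := by exact_mod_cast treeC_pos (by omega) m
    exact pos_of_mul_pos_left (this.trans_le h) hcn.le
  rcases le_or_gt m n with hmn | hnm
  · have : (m : ℝ) ≤ n := by exact_mod_cast hmn
    linarith
  obtain ⟨k, rfl⟩ := Nat.exists_eq_add_of_le hnm.le
  have hqk : ((q ^ k * treeC q n : ℕ) : ℝ) ≤ treeC q (n + k) := by
    exact_mod_cast pow_mul_treeC_le q n k
  push_cast at hqk
  have hkA : (q : ℝ) ^ k ≤ A := le_of_mul_le_mul_right (hqk.trans h) hcn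
  have hk : (k : ℝ) ≤ (q : ℝ) ^ k := by exact_mod_cast (Nat.lt_pow_self (by omega)).le
  push_cast
  linarith

namespace HomTree

variable {q : ℕ} (T : HomTree q) {p : ℝ}

@[simp]
lemma mem_levelFinset {v : T.V} {n : ℕ} : v ∈ T.levelFinset n ↔ T.level v = n := by
  simp [levelFinset]

lemma pairwiseDisjoint_levelFinset (s : Set ℕ) : s.PairwiseDisjoint T.levelFinset :=
  fun _ _ _ _ hab => disjoint_left.2 fun _ ha hb => hab ((T.mem_levelFinset.1 ha).symm.trans
    (T.mem_levelFinset.1 hb))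

lemma Mp_nonneg (n : ℕ) (f : T.V → ℂ) : 0 ≤ T.Mp p n f := by
  unfold Mp
  positivity

lemma normTp_nonneg (f : T.V → ℂ) : 0 ≤ T.normTp p f :=
  Real.iSup_nonneg fun n => T.Mp_nonneg n f

lemma memTp_of_forall_Mp_le {f : T.V → ℂ} {B : ℝ} (h : ∀ n, T.Mp p n f ≤ B) : T.memTp p f :=
  ⟨B, by rintro _ ⟨n, rfl⟩; exact h n⟩

lemma Mp_rpow (hp : 0 < p) (n : ℕ) (f : T.V → ℂ) :
    T.Mp p n f ^ p = 1 / (treeC q n : ℝ) * ∑ v ∈ T.levelFinset n, ‖f v‖ ^ p := by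
  rw [Mp, ← Real.rpow_mul (by positivity), one_div_mul_cancel hp.ne', Real.rpow_one]

lemma sum_rpow_level_le (hq : 0 < q) (hp : 0 < p) {f : T.V → ℂ} (hf : T.memTp p f) (n : ℕ) :
    ∑ v ∈ T.levelFinset n, ‖f v‖ ^ p ≤ treeC q n * T.normTp p f ^ p := by
  have hc : (0 : ℝ) < treeC q n := by exact_mod_cast treeC_pos hq n
  calc ∑ v ∈ T.levelFinset n, ‖f v‖ ^ p = treeC q n * T.Mp p n f ^ p := by
        rw [T.Mp_rpow hp]
        field_simp
    _ ≤ treeC q n * T.normTp p f ^ p := by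
        gcongr
        · exact T.Mp_nonneg n f
        · exact le_ciSup hf n

lemma Mp_le_of_sum_rpow_le (hp : 0 < p) {f : T.V → ℂ} {n : ℕ} {K B : ℝ} (hK : 0 ≤ K)
    (hB : 0 ≤ B) (h : ∑ v ∈ T.levelFinset n, ‖f v‖ ^ p ≤ K * treeC q n * B ^ p) :
    T.Mp p n f ≤ K ^ (1 / p) * B := by
  have hKB : 1 / (treeC q n : ℝ) * ∑ v ∈ T.levelFinset n, ‖f v‖ ^ p ≤ K * B ^ p :=
    calc 1 / (treeC q n : ℝ) * ∑ v ∈ T.levelFinset n, ‖f v‖ ^ p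
        ≤ 1 / (treeC q n : ℝ) * (K * treeC q n * B ^ p) := by gcongr
      _ = K * B ^ p * ((treeC q n : ℝ) / treeC q n) := by ring
      _ ≤ K * B ^ p := mul_le_of_le_one_right (by positivity) (div_self_le_one _)
  calc T.Mp p n f ≤ (K * B ^ p) ^ (1 / p) := by
        unfold Mp
        gcongr
    _ = K ^ (1 / p) * B := by
        rw [Real.mul_rpow hK (by positivity), ← Real.rpow_mul hB, mul_one_div_cancel hp.ne',
          Real.rpow_one]

lemma sum_comp_le_sum_Icc {ψ : T.V → T.V} (hψ : Function.Injective ψ) {N : ℕ}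
    (hN : ∀ v, T.level (ψ v) ∈ Icc (T.level v - N) (T.level v + N)) {g : T.V → ℝ} (hg : 0 ≤ g)
    (n : ℕ) :
    ∑ v ∈ T.levelFinset n, g (ψ v) ≤ ∑ m ∈ Icc (n - N) (n + N), ∑ w ∈ T.levelFinset m, g w := by
  rw [← sum_image hψ.injOn, ← sum_biUnion (T.pairwiseDisjoint_levelFinset _)]
  refine sum_le_sum_of_subset_of_nonneg ?_ fun w _ _ => hg w
  intro w hw
  obtain ⟨v, hv, rfl⟩ := mem_image.1 hw
  rw [mem_levelFinset] at hv
  exact mem_biUnion.2 ⟨_, hv ▸ hN v, T.mem_levelFinset.2 rfl⟩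

lemma Mp_comp_le (hq : 0 < q) (hp : 0 < p) {ψ : T.V → T.V} (hψ : Function.Injective ψ)
    {N : ℕ} (hN : ∀ v, T.level (ψ v) ∈ Icc (T.level v - N) (T.level v + N)) {f : T.V → ℂ}
    (hf : T.memTp p f) (n : ℕ) :
    T.Mp p n (f ∘ ψ) ≤ ((2 * N + 1) * (q + 1) * q ^ N : ℝ) ^ (1 / p) * T.normTp p f := by
  refine T.Mp_le_of_sum_rpow_le hp (by positivity) (T.normTp_nonneg f) ?_
  have hB : 0 ≤ T.normTp p f ^ p := Real.rpow_nonneg (T.normTp_nonneg f) p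
  calc ∑ v ∈ T.levelFinset n, ‖(f ∘ ψ) v‖ ^ p
      ≤ ∑ m ∈ Icc (n - N) (n + N), ∑ w ∈ T.levelFinset m, ‖f w‖ ^ p :=
        T.sum_comp_le_sum_Icc hψ hN (g := fun w => ‖f w‖ ^ p) (fun w => by positivity) n
    _ ≤ ∑ m ∈ Icc (n - N) (n + N), (treeC q (n + N) : ℝ) * T.normTp p f ^ p := by
        refine sum_le_sum fun m hm => (T.sum_rpow_level_le hq hp hf m).trans ?_
        gcongr
        exact treeC_mono hq (mem_Icc.1 hm).2
    _ = (#(Icc (n - N) (n + N)) : ℝ) * treeC q (n + N) * T.normTp p f ^ p := by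
        rw [sum_const, nsmul_eq_mul, mul_assoc]
    _ ≤ (2 * N + 1) * ((q + 1) * q ^ N * treeC q n) * T.normTp p f ^ p := by
        gcongr
        · exact_mod_cast (Nat.card_Icc _ _).trans_le (by omega)
        · exact_mod_cast treeC_add_le hq n N
    _ = (2 * N + 1) * (q + 1) * q ^ N * treeC q n * T.normTp p f ^ p := by ring

lemma boundedCompTp_of_injective (hq : 0 < q) (hp : 0 < p) {ψ : T.V → T.V}
    (hψ : Function.Injective ψ) {M : ℝ} (hM : ∀ v, |(T.level (ψ v) : ℝ) - T.level v| ≤ M) :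
    T.BoundedCompTp p ψ := by
  have hN : ∀ v, T.level (ψ v) ∈ Icc (T.level v - ⌈M⌉₊) (T.level v + ⌈M⌉₊) := by
    intro v
    obtain ⟨h₁, h₂⟩ := abs_le.1 ((hM v).trans (Nat.le_ceil M))
    have h₁' : (T.level v : ℝ) ≤ T.level (ψ v) + ⌈M⌉₊ := by linarith
    have h₂' : (T.level (ψ v) : ℝ) ≤ T.level v + ⌈M⌉₊ := by linarith
    norm_cast at h₁' h₂'
    rw [mem_Icc]
    omega
  have key := fun f (hf : T.memTp p f) n => T.Mp_comp_le hq hp hψ hN hf n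
  exact ⟨fun f hf => T.memTp_of_forall_Mp_le (key f hf), _, fun f hf => ciSup_le (key f hf)⟩

lemma Mp_single (hp : p ≠ 0) (w : T.V) (n : ℕ) :
    T.Mp p n (Pi.single w 1) = if T.level w = n then (1 / (treeC q n : ℝ)) ^ (1 / p) else 0 := by
  have hsum : ∑ v ∈ T.levelFinset n, ‖(Pi.single w 1 : T.V → ℂ) v‖ ^ p =
      if T.level w = n then 1 else 0 := by
    simp_rw [Pi.single_apply, apply_ite (fun z : ℂ => ‖z‖ ^ p), norm_one, norm_zero,
      Real.one_rpow, Real.zero_rpow hp, sum_ite_eq', mem_levelFinset]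
  rw [Mp, hsum]
  split_ifs
  · rw [mul_one]
  · rw [mul_zero, Real.zero_rpow (one_div_ne_zero hp)]

lemma Mp_single_le (hp : p ≠ 0) (w : T.V) (n : ℕ) :
    T.Mp p n (Pi.single w 1) ≤ (1 / (treeC q (T.level w) : ℝ)) ^ (1 / p) := by
  rw [T.Mp_single hp]
  split_ifs with h
  · rw [h]
  · positivity

lemma memTp_single (hp : p ≠ 0) (w : T.V) : T.memTp p (Pi.single w 1) :=
  T.memTp_of_forall_Mp_le (T.Mp_single_le hp w)

lemma normTp_single (hp : p ≠ 0) (w : T.V) :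
    T.normTp p (Pi.single w 1) = (1 / (treeC q (T.level w) : ℝ)) ^ (1 / p) := by
  refine le_antisymm (ciSup_le (T.Mp_single_le hp w)) ?_
  have h := le_ciSup (T.memTp_single hp w) (T.level w)
  rwa [T.Mp_single hp, if_pos rfl] at h

lemma level_le_of_normTp_single_le (hq : 2 ≤ q) (hp : 0 < p) {a b : T.V} {C : ℝ}
    (h : T.normTp p (Pi.single a 1) ≤ C * T.normTp p (Pi.single b 1)) :
    (T.level b : ℝ) ≤ T.level a + C ^ p := by
  rw [T.normTp_single hp.ne', T.normTp_single hp.ne'] at h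
  have hca : (0 : ℝ) < treeC q (T.level a) := by exact_mod_cast treeC_pos (by omega) _
  have hcb : (0 : ℝ) < treeC q (T.level b) := by exact_mod_cast treeC_pos (by omega) _
  have hC : 0 < C := pos_of_mul_pos_left ((by positivity : (0 : ℝ) < _).trans_le h)
    (by positivity)
  have hp' := Real.rpow_le_rpow (by positivity) h hp.le
  rw [Real.mul_rpow hC.le (by positivity), ← Real.rpow_mul (by positivity),
    ← Real.rpow_mul (by positivity), one_div_mul_cancel hp.ne', Real.rpow_one,
    Real.rpow_one] at hp'
  refine le_add_of_treeC_le hq ?_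
  rw [mul_one_div, div_le_div_iff₀ hca hcb] at hp'
  linarith

lemma single_comp_of_injective {ψ : T.V → T.V} (hψ : Function.Injective ψ) (v : T.V) :
    (Pi.single (ψ v) 1 : T.V → ℂ) ∘ ψ = Pi.single v 1 := by
  ext x
  simp [Pi.single_apply, hψ.eq_iff]

lemma exists_level_apply_le_of_boundedCompTp (hq : 2 ≤ q) (hp : 0 < p) {ψ : T.V → T.V}
    (hψ : Function.Injective ψ) (h : T.BoundedCompTp p ψ) :
    ∃ M, ∀ v, (T.level (ψ v) : ℝ) ≤ T.level v + M := by
  obtain ⟨-, C, hC⟩ := h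
  refine ⟨C ^ p, fun v => T.level_le_of_normTp_single_le hq hp ?_⟩
  simpa [T.single_comp_of_injective hψ] using hC _ (T.memTp_single hp.ne' (ψ v))

lemma exists_abs_level_sub_le (hq : 2 ≤ q) (hp : 0 < p) (e : T.V ≃ T.V)
    (he : T.BoundedCompTp p e) (he' : T.BoundedCompTp p e.symm) :
    ∃ M, 0 < M ∧ ∀ v, |(T.level (e v) : ℝ) - T.level v| ≤ M := by
  obtain ⟨M₁, hM₁⟩ := T.exists_level_apply_le_of_boundedCompTp hq hp e.injective he
  obtain ⟨M₂, hM₂⟩ := T.exists_level_apply_le_of_boundedCompTp hq hp e.symm.injective he'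
  refine ⟨max (max M₁ M₂) 1, lt_max_of_lt_right one_pos, fun v => abs_le.2 ⟨?_, ?_⟩⟩
  · have := hM₂ (e v)
    rw [e.symm_apply_apply] at this
    linarith [le_max_right M₁ M₂, le_max_left (max M₁ M₂) 1]
  · linarith [hM₁ v, le_max_left M₁ M₂, le_max_left (max M₁ M₂) 1]

lemma bijective_of_invertibleCompTp (hp : p ≠ 0) {φ : T.V → T.V}
    (h : T.InvertibleCompTp p φ) : Function.Bijective φ := by
  obtain ⟨-, B, -, hsmul, -, -, hBl, hBr⟩ := h
  refine ⟨fun a b hab => ?_, fun w => ?_⟩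
  · have hinv := congr_fun (hBr _ (T.memTp_single hp a))
    have hb : (Pi.single a 1 : T.V → ℂ) b = 1 := by
      rw [← hinv b, Function.comp_apply, ← hab, ← Function.comp_apply (f := B _), hinv a,
        Pi.single_eq_same]
    by_contra hne
    simp [Ne.symm hne] at hb
  · by_contra! hw
    have h0 : (Pi.single w 1 : T.V → ℂ) ∘ φ = (0 : ℂ) • Pi.single w 1 := by
      ext v
      simp [Pi.single_apply, hw v]
    have := congr_fun (hBl _ (T.memTp_single hp w)) w
    rw [h0, hsmul _ _ (T.memTp_single hp w)] at this
    simp at this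

lemma invertibleCompTp_iff (e : T.V ≃ T.V) :
    T.InvertibleCompTp p e ↔ T.BoundedCompTp p e ∧ T.BoundedCompTp p e.symm := by
  constructor
  · rintro ⟨he, B, -, -, hBmem, ⟨C, hC⟩, -, hBr⟩
    have hB : ∀ f, T.memTp p f → B f = f ∘ e.symm := fun f hf => by
      ext w
      simpa using congr_fun (hBr f hf) (e.symm w)
    exact ⟨he, fun f hf => hB f hf ▸ hBmem f hf, C, fun f hf => hB f hf ▸ hC f hf⟩
  · rintro ⟨he, hmem, C, hC⟩
    refine ⟨he, (· ∘ e.symm), fun _ _ _ _ => rfl, fun _ _ _ => rfl, hmem, ⟨C, hC⟩, ?_, ?_⟩ <;>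
    · intro f _
      ext
      simp

end HomTree

/-- For `q ≥ 2` and `1 ≤ p < ∞`: `C_φ` is invertible on `T_p` iff `φ` is bijective and
`||φ v| − |v|| ≤ M` for some `M > 0` and all `v`. -/
theorem invertible_comp_Tp_iff (q : ℕ) (hq : 2 ≤ q) (T : HomTree q)
    (p : ℝ) (hp : 1 ≤ p) (phi : T.V → T.V) :
    T.InvertibleCompTp p phi ↔
      (Function.Bijective phi ∧
        ∃ M : ℝ, 0 < M ∧ ∀ v : T.V, |(T.level (phi v) : ℝ) - (T.level v : ℝ)| ≤ M) := by
  have hp₀ : 0 < p := by linarith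
  constructor
  · intro h
    have hφ := T.bijective_of_invertibleCompTp hp₀.ne' h
    obtain ⟨he, he'⟩ := (T.invertibleCompTp_iff (Equiv.ofBijective phi hφ)).1 h
    exact ⟨hφ, T.exists_abs_level_sub_le hq hp₀ _ he he'⟩
  · rintro ⟨hφ, M, -, hM⟩
    set e := Equiv.ofBijective phi hφ
    have hM' : ∀ w, |(T.level (e.symm w) : ℝ) - T.level w| ≤ M := fun w => by
      simpa [abs_sub_comm, e, Equiv.ofBijective_apply_symm_apply] using hM (e.symm w)
    exact (T.invertibleCompTp_iff e).2
      ⟨T.boundedCompTp_of_injective (by omega) hp₀ e.injective hM,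
        T.boundedCompTp_of_injective (by omega) hp₀ e.symm.injective hM'⟩
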